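/- arXiv:2007.13636 — 5 statements merged into one kernel-verified Lean document; each statement's English description precedes it below -/
import Mathlib

section
/- For every positive integer n, the sum over all permutations π of {1,...,n} of x^{w(π)} equals the rising factorial (x+1)(x+2)···(x+n-1), where w(π) is defined as follows: scan π = π₁π₂...πₙ left to right, mark π₁, then mark each element smaller than the previously marked element; w(π) is the number of marked elements minus one. -/
/-!
Every arrangement of a list `t :: l` with `t` larger than all entries of `l` arises exactly once
by inserting `t` into an arrangement of `l` (this is how `List.permutations'` is built). Placed in
front, `t` is the first marked element and the old first element becomes marked as well, so the
weight goes up by one; placed anywhere else, `t` is never marked because the current marked value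
is at most the first entry, and the weight is unchanged. Hence inserting `t` into an arrangement of
length `k ≥ 1` multiplies the generating function by `x + k`; building `n - 1, …, 1, 0` up from
the singleton `[0]` gives `∏_{k=1}^{n-1} (x + k)`.
-/

open Finset

/-- Auxiliary: scan a list, marking each element smaller than the last marked
element `m`; count the marks. -/
def wAux : ℕ → List ℕ → ℕ
  | _, [] => 0
  | m, a :: l => if a < m then wAux a l + 1 else wAux m l

/-- The weight of a permutation written as a list: the first element is marked,
then each element smaller than the previously marked element is marked;
the weight is the number of marked elements minus one. -/
def wPerm : List ℕ → ℕ
  | [] => 0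
  | a :: l => wAux a l

theorem wAux_eq_of_mem_permutations'Aux {t : ℕ} :
    ∀ {l z : List ℕ} {m : ℕ}, m ≤ t → z ∈ l.permutations'Aux t → wAux m z = wAux m l
  | [], z, m, hm, hz => by
    obtain rfl : z = [t] := by simpa [List.permutations'Aux] using hz
    simp [wAux, hm.not_gt]
  | y :: ys, z, m, hm, hz => by
    simp only [List.permutations'Aux, List.mem_cons, List.mem_map] at hz
    obtain rfl | ⟨z, hz, rfl⟩ := hz
    · simp [wAux, hm.not_gt]
    · simp only [wAux]
      split_ifs with hym
      · rw [wAux_eq_of_mem_permutations'Aux (by omega) hz]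
      · rw [wAux_eq_of_mem_permutations'Aux hm hz]

theorem sum_map_permutations'Aux_pow_wPerm {R : Type*} [CommSemiring R] (x : R) {t : ℕ}
    {l : List ℕ} (hl : l ≠ []) (ht : ∀ a ∈ l, a < t) :
    ((l.permutations'Aux t).map fun z => x ^ wPerm z).sum = (x + l.length) * x ^ wPerm l := by
  obtain ⟨y, ys, rfl⟩ := List.exists_cons_of_ne_nil hl
  have hyt : y < t := ht y List.mem_cons_self
  have hrest : ∀ z ∈ ys.permutations'Aux t, wPerm (y :: z) = wPerm (y :: ys) :=
    fun z hz => wAux_eq_of_mem_permutations'Aux hyt.le hz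
  simp only [List.permutations'Aux, List.map_cons, List.map_map, List.sum_cons, Function.comp_def]
  rw [List.map_congr_left fun z hz => congrArg (x ^ ·) (hrest z hz)]
  simp only [wPerm, wAux, hyt, ↓reduceIte, pow_succ, List.map_const', List.length_permutations'Aux,
    List.sum_replicate, nsmul_eq_mul, Nat.cast_add, Nat.cast_one, List.length_cons]
  ring

theorem sum_map_permutations'_pow_wPerm {R : Type*} [CommSemiring R] (x : R) :
    ∀ {l : List ℕ}, l.Pairwise (· > ·) →
      ((l.permutations').map fun z => x ^ wPerm z).sum = ∏ i ∈ range (l.length - 1), (x + 1 + i)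
  | [], _ => by simp [wPerm]
  | [t], _ => by simp [List.permutations', List.permutations'Aux, wPerm, wAux]
  | t :: y :: ys, hl => by
    obtain ⟨ht, hl⟩ := List.pairwise_cons.mp hl
    have hinsert : ∀ z ∈ (y :: ys).permutations',
        ((z.permutations'Aux t).map fun u => x ^ wPerm u).sum
          = (x + (ys.length + 1 : ℕ)) * x ^ wPerm z := by
      intro z hz
      have hz := List.mem_permutations'.mp hz
      rw [sum_map_permutations'Aux_pow_wPerm x, hz.length_eq]
      · simp
      · rintro rfl
        simpa using hz.symm
      · exact fun a ha => ht a (hz.subset ha)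
    rw [List.permutations', List.map_flatMap, List.flatMap_def, List.sum_flatten, List.map_map,
      Function.comp_def, List.map_congr_left hinsert, List.sum_map_mul_left,
      sum_map_permutations'_pow_wPerm x hl]
    simp only [List.length_cons, Nat.add_sub_cancel, prod_range_succ]
    push_cast
    ring

theorem sum_perm_fin_eq_sum_map_permutations {M : Type*} [AddCommMonoid M] (n : ℕ)
    (f : List ℕ → M) :
    ∑ π : Equiv.Perm (Fin n), f (List.ofFn fun i => (π i : ℕ))
      = ((List.range n).permutations.map f).sum := by
  set φ : Equiv.Perm (Fin n) → List ℕ := fun π => List.ofFn fun i => (π i : ℕ)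
  have hφ : Function.Injective φ := fun π σ h =>
    Equiv.ext fun i => Fin.ext (congrFun (List.ofFn_inj.mp h) i)
  have hnodup := List.nodup_permutations _ (List.nodup_range (n := n))
  have himage : univ.image φ = (List.range n).permutations.toFinset := by
    refine eq_of_subset_of_card_le (fun l hl => ?_) ?_
    · obtain ⟨π, -, rfl⟩ := mem_image.mp hl
      rw [List.mem_toFinset, List.mem_permutations]
      refine (Equiv.Perm.ofFn_comp_perm π Fin.val).trans ?_
      rw [List.ofFn_eq_map, List.map_coe_finRange_eq_range]
    · rw [List.toFinset_card_of_nodup hnodup, List.length_permutations, List.length_range,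
        card_image_of_injective _ hφ, card_univ, Fintype.card_perm, Fintype.card_fin]
  rw [← sum_image hφ.injOn, himage, List.sum_toFinset _ hnodup]

theorem stmt0_general (n : ℕ) (x : ℚ) :
    ∑ π : Equiv.Perm (Fin n), x ^ wPerm (List.ofFn fun i => ((π i : Fin n) : ℕ)) =
      ∏ i ∈ Finset.range (n - 1), (x + 1 + i) := by
  have hperm : (List.range n).permutations.Perm (List.range n).reverse.permutations' :=
    (List.permutations_perm_permutations' _).trans (List.reverse_perm _).symm.permutations'
  rw [sum_perm_fin_eq_sum_map_permutations n (x ^ wPerm ·), (hperm.map _).sum_eq,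
    sum_map_permutations'_pow_wPerm x (List.pairwise_reverse.mpr List.pairwise_lt_range),
    List.length_reverse, List.length_range]

theorem stmt0 (n : ℕ) (hn : 0 < n) (x : ℚ) :
    ∑ π : Equiv.Perm (Fin n), x ^ wPerm (List.ofFn fun i => ((π i : Fin n) : ℕ)) =
      ∏ i ∈ Finset.range (n - 1), (x + 1 + i) :=
  stmt0_general n x
end

section
/- Define C(n,k,x) := Σ_{j=0}^{min(n,k)} j! · (x+1)^{(j)} · S(n+1, j+1) · S(k+1, j+1), where (x+1)^{(j)} = (x+1)(x+2)···(x+j) is the rising factorial and S denotes Stirling numbers of the second kind. Then for all integers n ≥ 0 and k > 0, C(n,k,x) = C(n,k-1,x) + Σ_{j=1}^{n} binom(n,j) · C(n-j+1, k-1, x) + x · Σ_{j=1}^{n} binom(n,j) · C(n-j, k-1, x), as polynomials in x. -/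
/-!
Write `C(n,k,x) = ∑ⱼ wⱼ S(n+1,j+1) S(k+1,j+1)` with `wⱼ = j! (x+1)^(j)`, so that
`wⱼ₊₁ = (j+1)(x+j+1) wⱼ`. On the left, `S(k+1,j+1) = (j+1) S(k,j+1) + S(k,j)` and a shift of `j`
express `C(n,k,x)` through the `S(k,j+1)`. On the right, the binomial recurrence
`∑ᵢ binom(n,i) S(i,t) = S(n+1,t+1)` evaluates the binomial sums over the first argument, and the
coefficients of each `wⱼ S(k,j+1)` agree.
-/

open Finset

/-- Stirling numbers of the second kind. -/
def stirling2 : ℕ → ℕ → ℕ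
  | 0, 0 => 1
  | 0, _ + 1 => 0
  | _ + 1, 0 => 0
  | n + 1, k + 1 => (k + 1) * stirling2 n (k + 1) + stirling2 n k

/-- Unsigned Stirling numbers of the first kind. -/
def stirling1 : ℕ → ℕ → ℕ
  | 0, 0 => 1
  | 0, _ + 1 => 0
  | _ + 1, 0 => 0
  | n + 1, k + 1 => n * stirling1 n (k + 1) + stirling1 n k

/-- The Callan polynomial, evaluated at x : ℚ. -/
def callan (n k : ℕ) (x : ℚ) : ℚ :=
  ∑ j ∈ Finset.range (min n k + 1),
    (j.factorial : ℚ) * (∏ i ∈ Finset.range j, (x + 1 + i)) *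
      stirling2 (n + 1) (j + 1) * stirling2 (k + 1) (j + 1)

theorem stirling2_eq_stirlingSecond : stirling2 = Nat.stirlingSecond := by
  funext n k
  induction n generalizing k with
  | zero => cases k <;> rfl
  | succ n ih => cases k <;> simp [stirling2, Nat.stirlingSecond_succ_succ, ih]

theorem sum_range_choose_succ_smul {M : Type*} [AddCommMonoid M] (f : ℕ → M) (n : ℕ) :
    ∑ i ∈ range (n + 2), (n + 1).choose i • f i
      = ∑ i ∈ range (n + 1), n.choose i • (f i + f (i + 1)) := by
  have low : ∑ i ∈ range (n + 1), n.choose i • f i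
      = ∑ i ∈ range n, n.choose (i + 1) • f (i + 1) + f 0 := by
    simp [sum_range_succ']
  have high : ∑ i ∈ range (n + 1), n.choose (i + 1) • f (i + 1)
      = ∑ i ∈ range n, n.choose (i + 1) • f (i + 1) := by
    simp [sum_range_succ]
  rw [sum_range_succ']
  simp only [Nat.choose_succ_succ, add_smul, smul_add, sum_add_distrib, high, low]
  simp only [Nat.choose_zero_right, one_smul]
  abel

theorem sum_Icc_choose_mul_sub {R : Type*} [Semiring R] (f : ℕ → R) (n : ℕ) :
    ∑ r ∈ Icc 1 n, (n.choose r : R) * f (n - r) = ∑ i ∈ range n, (n.choose i : R) * f i := by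
  refine sum_nbij' (n - ·) (n - ·) ?_ ?_ ?_ ?_ ?_ <;> intro r hr <;>
    simp only [mem_Icc, mem_range] at hr ⊢
  · omega
  · omega
  · omega
  · omega
  · rw [Nat.choose_symm hr.2]

namespace Nat

theorem sum_range_choose_mul_stirlingSecond (n t : ℕ) :
    ∑ i ∈ range (n + 1), n.choose i * stirlingSecond i t = stirlingSecond (n + 1) (t + 1) := by
  induction n generalizing t with
  | zero => cases t <;> rfl
  | succ n ih =>
    have shift : ∑ i ∈ range (n + 1), n.choose i * stirlingSecond (i + 1) t
        = t * stirlingSecond (n + 1) (t + 1) + stirlingSecond (n + 1) t := by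
      cases t with
      | zero => simp
      | succ u =>
        simp only [stirlingSecond_succ_succ _ u, mul_add, sum_add_distrib,
          mul_left_comm _ (u + 1), ← mul_sum, ih]
    have pascal := sum_range_choose_succ_smul (fun i => stirlingSecond i t) n
    simp only [smul_eq_mul, mul_add, sum_add_distrib] at pascal
    rw [pascal, ih, shift, stirlingSecond_succ_succ (n + 1) t]
    ring

theorem sum_range_choose_mul_stirlingSecond_succ (n t : ℕ) :
    ∑ i ∈ range n, n.choose i * stirlingSecond (i + 1) t = t * stirlingSecond (n + 1) (t + 1) := by
  have pascal := sum_range_choose_succ_smul (fun i => stirlingSecond i t) n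
  simp only [smul_eq_mul, mul_add, sum_add_distrib, sum_range_choose_mul_stirlingSecond] at pascal
  rw [sum_range_succ (fun i => n.choose i * stirlingSecond (i + 1) t), choose_self, one_mul,
    stirlingSecond_succ_succ (n + 1) t] at pascal
  linarith

theorem sum_range_choose_mul_stirlingSecond_add_two (n t : ℕ) :
    ∑ i ∈ range n, n.choose i * stirlingSecond (i + 2) (t + 1)
      = (t + 1) ^ 2 * stirlingSecond (n + 1) (t + 2) + t * stirlingSecond (n + 1) (t + 1) := by
  simp only [stirlingSecond_succ_succ (_ + 1) t, mul_add, sum_add_distrib, mul_left_comm _ (t + 1),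
    ← mul_sum, sum_range_choose_mul_stirlingSecond_succ]
  ring

end Nat

def callanWeight (x : ℚ) (j : ℕ) : ℚ := j.factorial * ∏ i ∈ range j, (x + 1 + i)

theorem callanWeight_succ (x : ℚ) (j : ℕ) :
    callanWeight x (j + 1) = (j + 1) * (x + j + 1) * callanWeight x j := by
  simp only [callanWeight, Nat.factorial_succ, prod_range_succ]
  push_cast
  ring

theorem callan_eq_sum_range {n k M : ℕ} (x : ℚ) (hM : min n k < M) :
    callan n k x = ∑ j ∈ range M,
      callanWeight x j * (n + 1).stirlingSecond (j + 1) * (k + 1).stirlingSecond (j + 1) := by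
  rw [callan, stirling2_eq_stirlingSecond]
  refine sum_subset (range_subset_range.2 (by omega)) fun j hjM hj => ?_
  simp only [mem_range] at hjM hj
  rcases le_total n k with h | h
  · simp [Nat.stirlingSecond_eq_zero_of_lt (show n + 1 < j + 1 by omega)]
  · simp [Nat.stirlingSecond_eq_zero_of_lt (show k + 1 < j + 1 by omega)]

theorem sum_Icc_choose_mul_callan {n s M : ℕ} (m : ℕ) (x : ℚ) (hM : n + s ≤ M) :
    ∑ r ∈ Icc 1 n, (n.choose r : ℚ) * callan (n - r + s) m x
      = ∑ j ∈ range M, callanWeight x j * (m + 1).stirlingSecond (j + 1) *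
          ∑ i ∈ range n, (n.choose i : ℚ) * (i + s + 1).stirlingSecond (j + 1) := by
  rw [sum_Icc_choose_mul_sub (fun i => callan (i + s) m x)]
  calc ∑ i ∈ range n, (n.choose i : ℚ) * callan (i + s) m x
      = ∑ i ∈ range n, (n.choose i : ℚ) * ∑ j ∈ range M, callanWeight x j *
          (i + s + 1).stirlingSecond (j + 1) * (m + 1).stirlingSecond (j + 1) :=
        sum_congr rfl fun i hi => by
          rw [callan_eq_sum_range (M := M) x (by simp only [mem_range] at hi; omega)]
    _ = _ := by
      simp only [mul_sum]
      rw [sum_comm]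
      exact sum_congr rfl fun j _ => sum_congr rfl fun i _ => by ring

theorem callan_succ_right (n m : ℕ) (x : ℚ) :
    callan n (m + 1) x = ∑ j ∈ range (n + 1), (j + 1) * ((n + 1).stirlingSecond (j + 1) +
      (x + j + 1) * (n + 1).stirlingSecond (j + 2)) * callanWeight x j *
        (m + 1).stirlingSecond (j + 1) := by
  have shift : ∑ j ∈ range (n + 1),
      callanWeight x j * (n + 1).stirlingSecond (j + 1) * (m + 1).stirlingSecond j
      = ∑ j ∈ range (n + 1),
      callanWeight x (j + 1) * (n + 1).stirlingSecond (j + 2) * (m + 1).stirlingSecond (j + 1) := by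
    rw [sum_range_succ', sum_range_succ _ n]
    simp [Nat.stirlingSecond_eq_zero_of_lt (show n + 1 < n + 2 by omega)]
  calc callan n (m + 1) x
      = ∑ j ∈ range (n + 1), callanWeight x j * (n + 1).stirlingSecond (j + 1) *
            ((j + 1) * (m + 1).stirlingSecond (j + 1))
        + ∑ j ∈ range (n + 1),
            callanWeight x j * (n + 1).stirlingSecond (j + 1) * (m + 1).stirlingSecond j := by
        rw [callan_eq_sum_range x (M := n + 1) (by omega), ← sum_add_distrib]
        refine sum_congr rfl fun j _ => ?_
        rw [Nat.stirlingSecond_succ_succ (m + 1)]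
        push_cast
        ring
    _ = _ := by
        rw [shift, ← sum_add_distrib]
        refine sum_congr rfl fun j _ => ?_
        rw [callanWeight_succ]
        ring

theorem stmt2 (n k : ℕ) (hk : 0 < k) (x : ℚ) :
    callan n k x =
      callan n (k - 1) x
        + ∑ j ∈ Finset.Icc 1 n, (n.choose j : ℚ) * callan (n - j + 1) (k - 1) x
        + x * ∑ j ∈ Finset.Icc 1 n, (n.choose j : ℚ) * callan (n - j) (k - 1) x := by
  obtain ⟨m, rfl⟩ : ∃ m, k = m + 1 := ⟨k - 1, by omega⟩
  have shifted := sum_Icc_choose_mul_callan (n := n) (s := 1) m x le_rfl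
  have unshifted := sum_Icc_choose_mul_callan (n := n) (s := 0) m x (Nat.le_succ n)
  simp only [add_zero] at unshifted
  rw [Nat.add_sub_cancel, callan_succ_right, callan_eq_sum_range x (M := n + 1) (by omega),
    shifted, unshifted, mul_sum, ← sum_add_distrib, ← sum_add_distrib]
  refine sum_congr rfl fun j _ => ?_
  have binom_succ : ∑ i ∈ range n, (n.choose i : ℚ) * (i + 1).stirlingSecond (j + 1)
      = (j + 1) * (n + 1).stirlingSecond (j + 2) := by
    exact_mod_cast Nat.sum_range_choose_mul_stirlingSecond_succ n (j + 1)
  have binom_add_two : ∑ i ∈ range n, (n.choose i : ℚ) * (i + 1 + 1).stirlingSecond (j + 1)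
      = (j + 1) ^ 2 * (n + 1).stirlingSecond (j + 2) + j * (n + 1).stirlingSecond (j + 1) := by
    exact_mod_cast Nat.sum_range_choose_mul_stirlingSecond_add_two n j
  rw [binom_succ, binom_add_two]
  ring
end

section
/- For all integers n ≥ 0, m > 0, and j with 0 ≤ j < m, we have Σ_{ℓ=0}^{∞} (-1)^ℓ · c(m+1, ℓ+1) · S(n+ℓ+1, j+1) = 0, where c denotes unsigned Stirling numbers of the first kind and S denotes Stirling numbers of the second kind (the sum is finite since c(m+1, ℓ+1) = 0 for ℓ > m). -/
open Finset

/-!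
Inclusion–exclusion gives `k! S(N, k) = (-1)^k ∑_{i ≤ k} (-1)^i C(k, i) i^N`, so every linear
relation `∑ a_l i^(e l) = 0` holding for all `i ≤ k` also holds with `i^(e l)` replaced by
`S(e l, k)`. Here `∑_l (-1)^l c(m+1, l+1) x^(n+l+1) = x^(n+1) ∏_{t=1}^{m} (t - x)` vanishes at
`x = 0, …, m`, in particular at every `x ≤ j + 1`.
-/

theorem stirling1_eq_stirlingFirst : stirling1 = Nat.stirlingFirst := by
  funext n k
  induction n generalizing k with
  | zero => cases k <;> rfl
  | succ n ih => cases k <;> simp [stirling1, Nat.stirlingFirst_succ_succ, ih]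

namespace Nat

theorem sum_stirlingFirst_succ_mul_pow {R : Type*} [CommSemiring R] (m : ℕ) (x : R) :
    ∑ l ∈ range (m + 1), (stirlingFirst (m + 1) (l + 1) : R) * x ^ l =
      ∏ t ∈ range m, (x + t + 1) := by
  induction m with
  | zero => simp [stirlingFirst_self]
  | succ m ih =>
    set Q := ∑ l ∈ range (m + 1), (stirlingFirst (m + 1) (l + 1) : R) * x ^ l
    have hxQ : x * Q = ∑ l ∈ range (m + 1), (stirlingFirst (m + 1) l : R) * x ^ l +
        x ^ (m + 1) := by
      have h := sum_range_succ' (fun l => (stirlingFirst (m + 1) l : R) * x ^ l) (m + 1)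
      rw [sum_range_succ, stirlingFirst_self, stirlingFirst_succ_zero] at h
      rw [Nat.cast_one, one_mul, Nat.cast_zero, zero_mul, add_zero] at h
      rw [h, mul_sum]
      exact sum_congr rfl fun l _ => by ring
    calc ∑ l ∈ range (m + 2), (stirlingFirst (m + 2) (l + 1) : R) * x ^ l
        = (m + 1) * Q + ∑ l ∈ range (m + 1), (stirlingFirst (m + 1) l : R) * x ^ l +
            x ^ (m + 1) := by
          rw [sum_range_succ, stirlingFirst_self, mul_sum, ← sum_add_distrib]
          simp only [stirlingFirst_succ_succ (m + 1)]
          push_cast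
          refine congrArg₂ _ (sum_congr rfl fun l _ => by ring) (by ring)
      _ = (x + (m + 1)) * Q := by rw [add_assoc, ← hxQ]; ring
      _ = ∏ t ∈ range (m + 1), (x + t + 1) := by
          rw [ih, prod_range_succ]; ring

def alternatingChoosePowSum (k N : ℕ) : ℤ :=
  ∑ i ∈ range (k + 1), (-1) ^ i * (k.choose i : ℤ) * (i : ℤ) ^ N

theorem alternatingChoosePowSum_succ_succ (k N : ℕ) :
    alternatingChoosePowSum (k + 1) (N + 1) =
      (k + 1) * (alternatingChoosePowSum (k + 1) N - alternatingChoosePowSum k N) := by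
  have pascal := sum_choose_succ_mul (R := ℤ) (fun i _ => (-1) ^ i * (i : ℤ) ^ N) k
  have absorb (i : ℕ) : ((k + 1).choose (i + 1) : ℤ) * (i + 1) = (k + 1) * k.choose i := by
    exact_mod_cast (add_one_mul_choose_eq k i).symm
  simp only [alternatingChoosePowSum]
  calc _ = (k + 1) * ∑ i ∈ range (k + 1),
            (k.choose i : ℤ) * ((-1) ^ (i + 1) * (i + 1 : ℕ) ^ N) := by
        rw [sum_range_succ', mul_sum, Nat.cast_zero, zero_pow (succ_ne_zero N), mul_zero,
          add_zero]
        refine sum_congr rfl fun i _ => ?_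
        push_cast
        linear_combination (-1) ^ (i + 1) * ((i : ℤ) + 1) ^ N * absorb i
    _ = _ := by
        rw [← sub_eq_of_eq_add' pascal]
        congr 1; congr 1 <;> exact sum_congr rfl fun i _ => by ring

theorem factorial_mul_stirlingSecond (N k : ℕ) :
    (k ! : ℤ) * stirlingSecond N k = (-1) ^ k * alternatingChoosePowSum k N := by
  induction N generalizing k with
  | zero =>
    cases k with
    | zero => simp [alternatingChoosePowSum]
    | succ k => simp [alternatingChoosePowSum, Int.alternating_sum_range_choose]
  | succ N ih =>
    cases k with
    | zero => simp [alternatingChoosePowSum]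
    | succ k =>
      have ih_succ := ih (k + 1)
      rw [factorial_succ] at ih_succ ⊢
      rw [stirlingSecond_succ_succ, alternatingChoosePowSum_succ_succ]
      push_cast at ih_succ ⊢
      linear_combination (k + 1 : ℤ) * ih_succ + (k + 1 : ℤ) * ih k

theorem sum_mul_stirlingSecond_eq_zero {ι : Type*} (s : Finset ι) (a : ι → ℤ) (e : ι → ℕ)
    (k : ℕ) (h : ∀ i ≤ k, ∑ l ∈ s, a l * (i : ℤ) ^ e l = 0) :
    ∑ l ∈ s, a l * stirlingSecond (e l) k = 0 := by
  rw [← mul_right_inj' (by positivity : (k ! : ℤ) ≠ 0), mul_zero]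
  calc (k ! : ℤ) * ∑ l ∈ s, a l * stirlingSecond (e l) k
      = (-1) ^ k * ∑ i ∈ range (k + 1),
          (-1) ^ i * (k.choose i : ℤ) * ∑ l ∈ s, a l * (i : ℤ) ^ e l := by
        simp only [mul_sum, mul_left_comm _ (a _), factorial_mul_stirlingSecond,
          alternatingChoosePowSum]
        rw [sum_comm]
    _ = 0 := by
        rw [sum_eq_zero fun i hi => by rw [h i (mem_range_succ_iff.mp hi), mul_zero],
          mul_zero]

theorem sum_neg_one_pow_mul_stirlingFirst_mul_pow_eq_zero (n m i : ℕ) (hi : i ≤ m) :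
    ∑ l ∈ range (m + 1), (-1 : ℤ) ^ l * stirlingFirst (m + 1) (l + 1) * (i : ℤ) ^ (n + l + 1) =
      0 := by
  have hprod : ∑ l ∈ range (m + 1),
      (-1 : ℤ) ^ l * stirlingFirst (m + 1) (l + 1) * (i : ℤ) ^ (n + l + 1) =
        (i : ℤ) ^ (n + 1) * ∏ t ∈ range m, (-(i : ℤ) + t + 1) := by
    rw [← sum_stirlingFirst_succ_mul_pow, mul_sum]
    exact sum_congr rfl fun l _ => by ring
  rw [hprod]
  rcases i.eq_zero_or_pos with rfl | hpos
  · simp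
  · refine mul_eq_zero_of_right _ (prod_eq_zero (mem_range.mpr (show i - 1 < m by omega)) ?_)
    push_cast [Nat.cast_sub hpos]
    ring

end Nat

theorem stmt3_general (n m j : ℕ) (hj : j < m) :
    ∑ l ∈ Finset.range (m + 1),
      (-1 : ℤ) ^ l * stirling1 (m + 1) (l + 1) * stirling2 (n + l + 1) (j + 1) = 0 := by
  rw [stirling1_eq_stirlingFirst, stirling2_eq_stirlingSecond]
  exact Nat.sum_mul_stirlingSecond_eq_zero _ _ (fun l => n + l + 1) _ fun i hi =>
    Nat.sum_neg_one_pow_mul_stirlingFirst_mul_pow_eq_zero n m i (by omega)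

theorem stmt3 (n m j : ℕ) (hm : 0 < m) (hj : j < m) :
    ∑ l ∈ Finset.range (m + 1),
      (-1 : ℤ) ^ l * stirling1 (m + 1) (l + 1) * stirling2 (n + l + 1) (j + 1) = 0 :=
  stmt3_general n m j hj
end

section
/- For all integers k ≥ j ≥ 0, Σ_{ℓ=j}^{k} (-1)^{ℓ+j} · c(k+2, ℓ+2) · S(ℓ+1, j+1) = (k+1)! / (j+1)!, where c is the unsigned Stirling number of the first kind and S is the Stirling number of the second kind. -/
open Finset

theorem Finset.sum_range_succ_shift_of_eq_zero {M : Type*} [AddCommGroup M] (f : ℕ → M) (n : ℕ)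
    (hf : f (n + 1) = 0) :
    ∑ m ∈ range (n + 1), f (m + 1) = ∑ m ∈ range (n + 1), f m - f 0 := by
  rw [eq_sub_iff_add_eq, ← sum_range_succ', sum_range_succ, hf, add_zero]

open Nat

section
variable {R : Type*} [CommRing R]

theorem sum_stirlingFirst_mul_stirlingSecond (n p : ℕ) :
    ∑ m ∈ range (n + 1), (-1 : R) ^ (m + p) * stirlingFirst n m * stirlingSecond m p =
      if n = p then 1 else 0 := by
  induction n generalizing p with
  | zero => cases p <;> simp
  | succ n ih =>
    rw [sum_range_succ']
    cases p with
    | zero => simp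
    | succ q =>
      have hsplit : ∀ m, (-1 : R) ^ (m + 1 + (q + 1)) * stirlingFirst (n + 1) (m + 1) *
            stirlingSecond (m + 1) (q + 1) =
          n * ((-1) ^ (m + 1 + (q + 1)) * stirlingFirst n (m + 1) * stirlingSecond (m + 1) (q + 1))
          - (q + 1) * ((-1) ^ (m + (q + 1)) * stirlingFirst n m * stirlingSecond m (q + 1))
          + (-1) ^ (m + q) * stirlingFirst n m * stirlingSecond m q := by
        intro m
        rw [stirlingFirst_succ_succ, stirlingSecond_succ_succ]
        push_cast
        ring
      simp only [hsplit, sum_add_distrib, sum_sub_distrib, ← mul_sum]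
      rw [sum_range_succ_shift_of_eq_zero
        (fun m ↦ (-1 : R) ^ (m + (q + 1)) * stirlingFirst n m * stirlingSecond m (q + 1)) n
        (by simp [stirlingFirst_eq_zero_of_lt]), ih, ih]
      split_ifs <;> simp_all

theorem sum_stirlingFirst_mul_stirlingSecond_succ (n j : ℕ) :
    ∑ l ∈ range (n + 1),
        (-1 : R) ^ (l + j) * stirlingFirst (n + 2) (l + 2) * stirlingSecond (l + 1) (j + 1) =
      (n + 1) * ∑ l ∈ range n,
          (-1 : R) ^ (l + j) * stirlingFirst (n + 1) (l + 2) * stirlingSecond (l + 1) (j + 1) +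
        if n = j then 1 else 0 := by
  have hsplit : ∀ l, (-1 : R) ^ (l + j) * stirlingFirst (n + 2) (l + 2) *
        stirlingSecond (l + 1) (j + 1) =
      (n + 1) * ((-1) ^ (l + j) * stirlingFirst (n + 1) (l + 2) * stirlingSecond (l + 1) (j + 1)) +
        (-1) ^ (l + 1 + (j + 1)) * stirlingFirst (n + 1) (l + 1) * stirlingSecond (l + 1) (j + 1) := by
    intro l
    rw [stirlingFirst_succ_succ]
    push_cast
    ring
  have horth := sum_stirlingFirst_mul_stirlingSecond (R := R) (n + 1) (j + 1)
  rw [sum_range_succ'] at horth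
  simp only [hsplit, sum_add_distrib, ← mul_sum]
  rw [sum_range_succ _ n, stirlingFirst_eq_zero_of_lt (by omega : n + 1 < n + 2)]
  simpa using horth

theorem factorial_mul_sum_stirlingFirst_mul_stirlingSecond {j n : ℕ} (h : j < n) :
    ((j + 1)! : R) * ∑ l ∈ range n,
        (-1 : R) ^ (l + j) * stirlingFirst (n + 1) (l + 2) * stirlingSecond (l + 1) (j + 1) =
      n ! := by
  induction n, h using Nat.le_induction with
  | base =>
    have hvanish : ∑ l ∈ range j,
        (-1 : R) ^ (l + j) * stirlingFirst (j + 1) (l + 2) * stirlingSecond (l + 1) (j + 1) = 0 :=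
      sum_eq_zero fun l hl ↦ by
        rw [stirlingSecond_eq_zero_of_lt (by simpa using hl)]
        simp
    rw [sum_stirlingFirst_mul_stirlingSecond_succ, hvanish]
    simp
  | succ n hjn ih =>
    rw [sum_stirlingFirst_mul_stirlingSecond_succ, if_neg (by omega), add_zero, mul_left_comm, ih,
      factorial_succ]
    push_cast
    ring
end

theorem stmt11 (k j : ℕ) (hj : j ≤ k) :
    ∑ l ∈ Finset.Icc j k,
        (-1 : ℚ) ^ (l + j) * stirling1 (k + 2) (l + 2) * stirling2 (l + 1) (j + 1) =
      ((k + 1).factorial : ℚ) / (j + 1).factorial := by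
  rw [stirling1_eq_stirlingFirst, stirling2_eq_stirlingSecond, eq_div_iff (by positivity),
    mul_comm]
  have hrange : ∑ l ∈ Icc j k,
        (-1 : ℚ) ^ (l + j) * stirlingFirst (k + 2) (l + 2) * stirlingSecond (l + 1) (j + 1) =
      ∑ l ∈ range (k + 1),
        (-1 : ℚ) ^ (l + j) * stirlingFirst (k + 2) (l + 2) * stirlingSecond (l + 1) (j + 1) := by
    refine sum_subset (fun l hl ↦ by simp at hl ⊢; omega) fun l hl hlj ↦ ?_
    rw [stirlingSecond_eq_zero_of_lt (by simp at hl hlj; omega)]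
    simp
  rw [hrange]
  exact factorial_mul_sum_stirlingFirst_mul_stirlingSecond (Nat.lt_succ_of_le hj)
end

section
/- Define B(n,k) := Σ_{j=0}^{min(n,k)} (j!)² · S(n+1, j+1) · S(k+1, j+1). Then for all integers n ≥ 0 and m > k ≥ 0, Σ_{ℓ=0}^{m} (-1)^ℓ · c(m+1, ℓ+1) · B(n+ℓ, k) = 0. -/
open Finset

/-- The poly-Bernoulli number B_n^{(-k)}. -/
def polyBernoulli (n k : ℕ) : ℕ :=
  ∑ j ∈ Finset.range (min n k + 1),
    j.factorial ^ 2 * stirling2 (n + 1) (j + 1) * stirling2 (k + 1) (j + 1)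

/-!
Since `∑ₗ (-1)^l c(m+1, l+1) x^l = (-1)^m (x - 1)(x - 2)⋯(x - m)`, the sum is, up to sign, the
difference operator `(E - 1)(E - 2)⋯(E - m)` (with `E` the shift `l ↦ l + 1`) applied to
`l ↦ B(n+l, k)` and evaluated at `0`. The recurrence `S(N+1, r) = r S(N, r) + S(N, r-1)` says that
`E - r` maps `l ↦ S(N+l, r)` to `l ↦ S(N+l, r-1)`, so the operator annihilates `l ↦ S(N+l, r)`
for `1 ≤ r ≤ m` (down to `S(N+l, 0) = 0`). Finally `B(n+l, k)` is a linear combination of the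
`S(n+l+1, j+1)` with `j ≤ k < m`.
-/

theorem stirling2_succ_succ (n k : ℕ) :
    stirling2 (n + 1) (k + 1) = (k + 1) * stirling2 n (k + 1) + stirling2 n k := rfl

theorem stirling1_succ_succ (n k : ℕ) :
    stirling1 (n + 1) (k + 1) = n * stirling1 n (k + 1) + stirling1 n k := rfl

theorem stirling2_eq_zero_of_lt : ∀ {n k : ℕ}, n < k → stirling2 n k = 0
  | 0, _ + 1, _ => rfl
  | n + 1, k + 1, h => by
    simp only [stirling2, stirling2_eq_zero_of_lt (by omega : n < k + 1),
      stirling2_eq_zero_of_lt (by omega : n < k), mul_zero]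

theorem stirling1_eq_zero_of_lt : ∀ {n k : ℕ}, n < k → stirling1 n k = 0
  | 0, _ + 1, _ => rfl
  | n + 1, k + 1, h => by
    simp only [stirling1, stirling1_eq_zero_of_lt (by omega : n < k + 1),
      stirling1_eq_zero_of_lt (by omega : n < k), mul_zero]

theorem polyBernoulli_eq_sum_range (n k : ℕ) :
    polyBernoulli n k = ∑ j ∈ range (k + 1),
      j.factorial ^ 2 * stirling2 (n + 1) (j + 1) * stirling2 (k + 1) (j + 1) := by
  refine sum_subset (range_subset_range.2 (by omega)) fun j hj hjn => ?_
  rw [stirling2_eq_zero_of_lt (by simp at hj hjn; omega), mul_zero, zero_mul]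

/-- `stirlingOperator m f = (-1)^m ((E - 1)⋯(E - m) f) 0` for the shift `E`. -/
def stirlingOperator (m : ℕ) : (ℕ → ℤ) →ₗ[ℤ] ℤ where
  toFun f := ∑ l ∈ range (m + 1), (-1) ^ l * stirling1 (m + 1) (l + 1) * f l
  map_add' f g := by simp only [Pi.add_apply, mul_add, sum_add_distrib]
  map_smul' c f := by
    simp only [Pi.smul_apply, smul_eq_mul, RingHom.id_apply, mul_sum]
    exact sum_congr rfl fun l _ => mul_left_comm _ c _

theorem stirlingOperator_apply (m : ℕ) (f : ℕ → ℤ) :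
    stirlingOperator m f = ∑ l ∈ range (m + 1), (-1) ^ l * stirling1 (m + 1) (l + 1) * f l :=
  rfl

theorem stirlingOperator_succ (m : ℕ) (f : ℕ → ℤ) :
    stirlingOperator (m + 1) f =
      (m + 1) * stirlingOperator m f - stirlingOperator m (fun l => f (l + 1)) := by
  have hrec (l : ℕ) : (-1) ^ l * (stirling1 (m + 2) (l + 1) : ℤ) * f l =
      (m + 1) * ((-1) ^ l * stirling1 (m + 1) (l + 1) * f l) +
        (-1) ^ l * stirling1 (m + 1) l * f l := by
    rw [stirling1_succ_succ]; push_cast; ring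
  have hlast : ∑ l ∈ range (m + 2), (m + 1 : ℤ) * ((-1) ^ l * stirling1 (m + 1) (l + 1) * f l) =
      (m + 1) * stirlingOperator m f := by
    rw [sum_range_succ, stirling1_eq_zero_of_lt (by omega : m + 1 < m + 2), ← mul_sum]
    simp [stirlingOperator_apply]
  have hfirst : ∑ l ∈ range (m + 2), (-1) ^ l * (stirling1 (m + 1) l : ℤ) * f l =
      -stirlingOperator m (fun l => f (l + 1)) := by
    rw [sum_range_succ', stirlingOperator_apply, ← sum_neg_distrib]
    simp [stirling1, pow_succ]
  rw [stirlingOperator_apply]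
  simp only [hrec, sum_add_distrib, hlast, hfirst]
  ring

theorem stirlingOperator_stirling2_eq_zero :
    ∀ {m r : ℕ} (N : ℕ), r ≤ m → stirlingOperator m (fun l => (stirling2 (N + l + 1) r : ℤ)) = 0
  | _, 0, _, _ => by simp only [stirling2, Nat.cast_zero]; exact map_zero _
  | 0, _ + 1, _, h => by omega
  | m + 1, j + 1, N, h => by
    have hshift : (fun l => (stirling2 (N + (l + 1) + 1) (j + 1) : ℤ)) =
        (j + 1 : ℤ) • (fun l => (stirling2 (N + l + 1) (j + 1) : ℤ)) +
          fun l => (stirling2 (N + l + 1) j : ℤ) := by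
      ext l
      rw [← add_assoc, stirling2_succ_succ]
      push_cast; rfl
    have hlower := stirlingOperator_stirling2_eq_zero (m := m) N (by omega : j ≤ m)
    have hsame : (m - j : ℤ) * stirlingOperator m (fun l => (stirling2 (N + l + 1) (j + 1) : ℤ))
        = 0 := by
      rcases Nat.lt_or_ge j m with hj | hj
      · rw [stirlingOperator_stirling2_eq_zero N hj, mul_zero]
      · rw [show (j : ℤ) = m by omega, sub_self, zero_mul]
    rw [stirlingOperator_succ, hshift, map_add, map_smul, hlower, smul_eq_mul]
    linear_combination hsame

theorem stmt14 (n k m : ℕ) (hk : k < m) :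
    ∑ l ∈ Finset.range (m + 1),
      (-1 : ℤ) ^ l * stirling1 (m + 1) (l + 1) * polyBernoulli (n + l) k = 0 := by
  have hB : (fun l => (polyBernoulli (n + l) k : ℤ)) = ∑ j ∈ range (k + 1),
      ((j.factorial ^ 2 * stirling2 (k + 1) (j + 1) : ℕ) : ℤ) •
        fun l => (stirling2 (n + l + 1) (j + 1) : ℤ) := by
    ext l
    simp only [polyBernoulli_eq_sum_range, Finset.sum_apply, Pi.smul_apply, smul_eq_mul]
    push_cast
    exact sum_congr rfl fun j _ => by ring
  rw [← stirlingOperator_apply, hB, map_sum]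
  refine sum_eq_zero fun j hj => ?_
  rw [map_smul, stirlingOperator_stirling2_eq_zero n (by simp at hj; omega), smul_zero]
end
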